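/- Let (v, q_1,…,q_N, r_1,…,r_N) with potential V solve the mKPESCS and let (g, U_1,…,U_N) be an adjoint eigenfunction datum for this solution with g nowhere vanishing. Then the tuple (ṽ, q̃_1,…,q̃_N, r̃_1,…,r̃_N) defined by ṽ := v − g_x/g, q̃_j := g·q_j − U_j, and r̃_j := r_j/g solves the mKPESCS with potential Ṽ := V − g_y/g. (This is the auto-Bäcklund transformation G_4[g] of the mKP hierarchy with self-consistent sources of Theorem 6.4, in the case k=2, n=3.) -/

import Mathlib

noncomputable section

open Finset

abbrev Pt3 : Type := ℝ × ℝ × ℝ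

/-- partial derivative in the first coordinate `x`. -/
def px (F : Pt3 → ℝ) : Pt3 → ℝ := fun p => deriv (fun s => F (s, p.2.1, p.2.2)) p.1

/-- partial derivative in the second coordinate `y`. -/
def py (F : Pt3 → ℝ) : Pt3 → ℝ := fun p => deriv (fun s => F (p.1, s, p.2.2)) p.2.1

/-- partial derivative in the third coordinate `t`. -/
def pt (F : Pt3 → ℝ) : Pt3 → ℝ := fun p => deriv (fun s => F (p.1, p.2.1, s)) p.2.2

/-- The mKP equation with self-consistent sources (mKPESCS), with potential `V`
satisfying `V_x = v_y`. -/
def SolvesMKPESCS (N : ℕ) (v V : Pt3 → ℝ) (q r : Fin N → Pt3 → ℝ) : Prop :=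
  (∀ p : Pt3, px V p = py v p) ∧
  (∀ p : Pt3, 4 * pt v p - px (px (px v)) p - 3 * py V p - 6 * V p * px v p
      + 6 * (v p)^2 * px v p + 4 * px (fun p' => ∑ j, q j p' * r j p') p = 0) ∧
  (∀ j, ∀ p : Pt3, py (q j) p = px (px (q j)) p + 2 * v p * px (q j) p) ∧
  (∀ j, ∀ p : Pt3, py (r j) p = -(px (px (r j)) p) + 2 * v p * px (r j) p)

/-- An adjoint eigenfunction datum `(g, U₁, …, U_N)` for a solution of the mKPESCS. -/
def MKPAdjointDatum (N : ℕ) (v V : Pt3 → ℝ) (q r : Fin N → Pt3 → ℝ)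
    (g : Pt3 → ℝ) (U : Fin N → Pt3 → ℝ) : Prop :=
  (∀ j, ∀ p : Pt3, px (U j) p = q j p * px g p) ∧
  (∀ j, ∀ p : Pt3, py (U j) p = px (q j) p * px g p - q j p * px (px g) p
      + 2 * v p * q j p * px g p) ∧
  (∀ p : Pt3, py g p = -(px (px g) p) + 2 * v p * px g p) ∧
  (∀ p : Pt3, pt g p = px (px (px g)) p - 3 * v p * px (px g) p
      + (3/2) * ((v p)^2 + V p - px v p) * px g p - ∑ j, r j p * U j p)

namespace MKPaux
variable {F G A : Pt3 → ℝ}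

theorem sliceX_hasDerivAt (hF : Differentiable ℝ F) (x b c : ℝ) :
    HasDerivAt (fun s => F (s, b, c)) (fderiv ℝ F (x, b, c) (1, 0, 0)) x :=
  (hF (x, b, c)).hasFDerivAt.comp_hasDerivAt x
    ((hasDerivAt_id x).prodMk (hasDerivAt_const x (b, c)))

theorem sliceY_hasDerivAt (hF : Differentiable ℝ F) (a y c : ℝ) :
    HasDerivAt (fun s => F (a, s, c)) (fderiv ℝ F (a, y, c) (0, 1, 0)) y :=
  (hF (a, y, c)).hasFDerivAt.comp_hasDerivAt y
    ((hasDerivAt_const y a).prodMk ((hasDerivAt_id y).prodMk (hasDerivAt_const y c)))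

theorem sliceT_hasDerivAt (hF : Differentiable ℝ F) (a b t : ℝ) :
    HasDerivAt (fun s => F (a, b, s)) (fderiv ℝ F (a, b, t) (0, 0, 1)) t :=
  (hF (a, b, t)).hasFDerivAt.comp_hasDerivAt t
    ((hasDerivAt_const t a).prodMk ((hasDerivAt_const t b).prodMk (hasDerivAt_id t)))

theorem px_eq (hF : Differentiable ℝ F) (p : Pt3) : px F p = fderiv ℝ F p (1, 0, 0) :=
  (sliceX_hasDerivAt hF p.1 p.2.1 p.2.2).deriv
theorem py_eq (hF : Differentiable ℝ F) (p : Pt3) : py F p = fderiv ℝ F p (0, 1, 0) :=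
  (sliceY_hasDerivAt hF p.1 p.2.1 p.2.2).deriv
theorem pt_eq (hF : Differentiable ℝ F) (p : Pt3) : pt F p = fderiv ℝ F p (0, 0, 1) :=
  (sliceT_hasDerivAt hF p.1 p.2.1 p.2.2).deriv

theorem contDiff_px (hF : ContDiff ℝ (⊤ : ℕ∞) F) : ContDiff ℝ (⊤ : ℕ∞) (px F) := by
  have : px F = fun p => fderiv ℝ F p (1, 0, 0) :=
    funext fun p => px_eq (hF.differentiable (by simp)) p
  rw [this]; exact (hF.fderiv_right (by simp)).clm_apply contDiff_const
theorem contDiff_py (hF : ContDiff ℝ (⊤ : ℕ∞) F) : ContDiff ℝ (⊤ : ℕ∞) (py F) := by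
  have : py F = fun p => fderiv ℝ F p (0, 1, 0) :=
    funext fun p => py_eq (hF.differentiable (by simp)) p
  rw [this]; exact (hF.fderiv_right (by simp)).clm_apply contDiff_const

theorem clm_deriv (hF : ContDiff ℝ (⊤ : ℕ∞) F) (p : Pt3) (e w : Pt3) :
    fderiv ℝ (fun q => fderiv ℝ F q e) p w = fderiv ℝ (fderiv ℝ F) p w e := by
  have h2 : DifferentiableAt ℝ (fderiv ℝ F) p :=
    ((hF.fderiv_right (m := (⊤ : ℕ∞)) (by simp)).differentiable (by simp)) p
  have h : HasFDerivAt (fun q => fderiv ℝ F q e)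
      ((ContinuousLinearMap.apply ℝ ℝ e).comp (fderiv ℝ (fderiv ℝ F) p)) p :=
    (ContinuousLinearMap.apply ℝ ℝ e).hasFDerivAt.comp p h2.hasFDerivAt
  rw [h.fderiv]; rfl

theorem pxpy (hF : ContDiff ℝ (⊤ : ℕ∞) F) : py (px F) = px (py F) := by
  funext p
  have hd := hF.differentiable (by simp)
  have hpx : px F = fun q => fderiv ℝ F q (1, 0, 0) := funext fun q => px_eq hd q
  have hpy : py F = fun q => fderiv ℝ F q (0, 1, 0) := funext fun q => py_eq hd q
  rw [py_eq ((contDiff_px hF).differentiable (by simp)) p,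
    px_eq ((contDiff_py hF).differentiable (by simp)) p, hpx, hpy,
    clm_deriv hF, clm_deriv hF]
  exact ((hF.contDiffAt).isSymmSndFDerivAt (by simp; exact WithTop.coe_le_coe.mpr (le_top : (2:ℕ∞) ≤ ⊤))) _ _

theorem pxpt (hF : ContDiff ℝ (⊤ : ℕ∞) F) : pt (px F) = px (pt F) := by
  funext p
  have hd := hF.differentiable (by simp)
  have hpx : px F = fun q => fderiv ℝ F q (1, 0, 0) := funext fun q => px_eq hd q
  have hpt : pt F = fun q => fderiv ℝ F q (0, 0, 1) := funext fun q => pt_eq hd q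
  have hcd : ContDiff ℝ (⊤ : ℕ∞) (pt F) := by
    rw [hpt]; exact (hF.fderiv_right (by simp)).clm_apply contDiff_const
  rw [pt_eq ((contDiff_px hF).differentiable (by simp)) p,
    px_eq (hcd.differentiable (by simp)) p, hpx, hpt, clm_deriv hF, clm_deriv hF]
  exact ((hF.contDiffAt).isSymmSndFDerivAt (by simp; exact WithTop.coe_le_coe.mpr (le_top : (2:ℕ∞) ≤ ⊤))) _ _

end MKPaux
namespace MKPaux
variable {F G A : Pt3 → ℝ}

theorem diffX (hF : ContDiff ℝ (⊤ : ℕ∞) F) (b c : ℝ) : Differentiable ℝ (fun s => F (s, b, c)) :=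
  (hF.differentiable (by simp)).comp (differentiable_id.prodMk (differentiable_const (b, c)))
theorem diffY (hF : ContDiff ℝ (⊤ : ℕ∞) F) (a c : ℝ) : Differentiable ℝ (fun s => F (a, s, c)) :=
  (hF.differentiable (by simp)).comp
    ((differentiable_const a).prodMk (differentiable_id.prodMk (differentiable_const c)))
theorem diffT (hF : ContDiff ℝ (⊤ : ℕ∞) F) (a b : ℝ) : Differentiable ℝ (fun s => F (a, b, s)) :=
  (hF.differentiable (by simp)).comp
    ((differentiable_const a).prodMk ((differentiable_const b).prodMk differentiable_id))

theorem px_add (hF : ContDiff ℝ (⊤ : ℕ∞) F) (hG : ContDiff ℝ (⊤ : ℕ∞) G) :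
    px (fun p => F p + G p) = fun p => px F p + px G p :=
  funext fun p => deriv_add ((diffX hF p.2.1 p.2.2) p.1) ((diffX hG p.2.1 p.2.2) p.1)
theorem px_sub (hF : ContDiff ℝ (⊤ : ℕ∞) F) (hG : ContDiff ℝ (⊤ : ℕ∞) G) :
    px (fun p => F p - G p) = fun p => px F p - px G p :=
  funext fun p => deriv_sub ((diffX hF p.2.1 p.2.2) p.1) ((diffX hG p.2.1 p.2.2) p.1)
theorem px_neg : px (fun p => -(F p)) = fun p => -(px F p) :=
  funext fun p => deriv.neg
theorem px_mul (hF : ContDiff ℝ (⊤ : ℕ∞) F) (hG : ContDiff ℝ (⊤ : ℕ∞) G) :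
    px (fun p => F p * G p) = fun p => px F p * G p + F p * px G p :=
  funext fun p => deriv_mul ((diffX hF p.2.1 p.2.2) p.1) ((diffX hG p.2.1 p.2.2) p.1)
theorem px_const (c : ℝ) : px (fun _ => c) = fun _ => 0 :=
  funext fun p => deriv_const p.1 c
theorem px_div (hF : ContDiff ℝ (⊤ : ℕ∞) F) (hG : ContDiff ℝ (⊤ : ℕ∞) G) (h0 : ∀ p, G p ≠ 0) :
    px (fun p => F p / G p) = fun p => px F p / G p - F p / G p * (px G p / G p) := by
  funext p
  have h := deriv_fun_div ((diffX hF p.2.1 p.2.2) p.1) ((diffX hG p.2.1 p.2.2) p.1)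
    (h0 (p.1, p.2.1, p.2.2))
  simp only [px, py, pt]
  rw [h]; field_simp [h0 (p.1, p.2.1, p.2.2)]

theorem py_add (hF : ContDiff ℝ (⊤ : ℕ∞) F) (hG : ContDiff ℝ (⊤ : ℕ∞) G) :
    py (fun p => F p + G p) = fun p => py F p + py G p :=
  funext fun p => deriv_add ((diffY hF p.1 p.2.2) p.2.1) ((diffY hG p.1 p.2.2) p.2.1)
theorem py_sub (hF : ContDiff ℝ (⊤ : ℕ∞) F) (hG : ContDiff ℝ (⊤ : ℕ∞) G) :
    py (fun p => F p - G p) = fun p => py F p - py G p :=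
  funext fun p => deriv_sub ((diffY hF p.1 p.2.2) p.2.1) ((diffY hG p.1 p.2.2) p.2.1)
theorem py_neg : py (fun p => -(F p)) = fun p => -(py F p) :=
  funext fun p => deriv.neg
theorem py_mul (hF : ContDiff ℝ (⊤ : ℕ∞) F) (hG : ContDiff ℝ (⊤ : ℕ∞) G) :
    py (fun p => F p * G p) = fun p => py F p * G p + F p * py G p :=
  funext fun p => deriv_mul ((diffY hF p.1 p.2.2) p.2.1) ((diffY hG p.1 p.2.2) p.2.1)
theorem py_const (c : ℝ) : py (fun _ => c) = fun _ => 0 :=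
  funext fun p => deriv_const p.2.1 c
theorem py_div (hF : ContDiff ℝ (⊤ : ℕ∞) F) (hG : ContDiff ℝ (⊤ : ℕ∞) G) (h0 : ∀ p, G p ≠ 0) :
    py (fun p => F p / G p) = fun p => py F p / G p - F p / G p * (py G p / G p) := by
  funext p
  have h := deriv_fun_div ((diffY hF p.1 p.2.2) p.2.1) ((diffY hG p.1 p.2.2) p.2.1)
    (h0 (p.1, p.2.1, p.2.2))
  simp only [px, py, pt]
  rw [h]; field_simp [h0 (p.1, p.2.1, p.2.2)]

theorem pt_sub (hF : ContDiff ℝ (⊤ : ℕ∞) F) (hG : ContDiff ℝ (⊤ : ℕ∞) G) :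
    pt (fun p => F p - G p) = fun p => pt F p - pt G p :=
  funext fun p => deriv_sub ((diffT hF p.1 p.2.1) p.2.2) ((diffT hG p.1 p.2.1) p.2.2)
theorem pt_div (hF : ContDiff ℝ (⊤ : ℕ∞) F) (hG : ContDiff ℝ (⊤ : ℕ∞) G) (h0 : ∀ p, G p ≠ 0) :
    pt (fun p => F p / G p) = fun p => pt F p / G p - F p / G p * (pt G p / G p) := by
  funext p
  have h := deriv_fun_div ((diffT hF p.1 p.2.1) p.2.2) ((diffT hG p.1 p.2.1) p.2.2)
    (h0 (p.1, p.2.1, p.2.2))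
  simp only [px, py, pt]
  rw [h]; field_simp [h0 (p.1, p.2.1, p.2.2)]

theorem px_sum {N : ℕ} (A : Fin N → Pt3 → ℝ) (hA : ∀ j, ContDiff ℝ (⊤ : ℕ∞) (A j)) :
    px (fun p => ∑ j, A j p) = fun p => ∑ j, px (A j) p :=
  funext fun p => deriv_fun_sum fun j _ => ((diffX (hA j) p.2.1 p.2.2) p.1)

end MKPaux

open MKPaux in
set_option maxHeartbeats 4000000 in
theorem mkpescs_autoBacklund_G4 (N : ℕ) (v V g : Pt3 → ℝ) (q r U : Fin N → Pt3 → ℝ)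
    (hv : ContDiff ℝ (⊤ : ℕ∞) v) (hV : ContDiff ℝ (⊤ : ℕ∞) V)
    (hq : ∀ j, ContDiff ℝ (⊤ : ℕ∞) (q j)) (hr : ∀ j, ContDiff ℝ (⊤ : ℕ∞) (r j))
    (hg : ContDiff ℝ (⊤ : ℕ∞) g) (hU : ∀ j, ContDiff ℝ (⊤ : ℕ∞) (U j))
    (hsol : SolvesMKPESCS N v V q r)
    (hdat : MKPAdjointDatum N v V q r g U)
    (hg0 : ∀ p : Pt3, g p ≠ 0) :
    SolvesMKPESCS N
      (fun p => v p - px g p / g p)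
      (fun p => V p - py g p / g p)
      (fun j => fun p => g p * q j p - U j p)
      (fun j => fun p => r j p / g p) := by
  obtain ⟨hVx, hmain, hqyP, hryP⟩ := hsol
  obtain ⟨hUxP, hUyP, hgyP, hgtP⟩ := hdat
  -- smoothness of iterated x-derivatives
  have hv1 : ContDiff ℝ (⊤ : ℕ∞) (px v) := contDiff_px hv
  have hv2 : ContDiff ℝ (⊤ : ℕ∞) (px (px v)) := contDiff_px hv1
  have hg1 : ContDiff ℝ (⊤ : ℕ∞) (px g) := contDiff_px hg
  have hg2 : ContDiff ℝ (⊤ : ℕ∞) (px (px g)) := contDiff_px hg1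
  have hg3 : ContDiff ℝ (⊤ : ℕ∞) (px (px (px g))) := contDiff_px hg2
  -- function-level versions of the hypotheses
  have hvy : py v = px V := funext fun p => (hVx p).symm
  have hgy : py g = fun p => -(px (px g) p) + 2 * v p * px g p := funext hgyP
  have hgt : pt g = fun p => px (px (px g)) p - 3 * v p * px (px g) p
      + 3/2 * (v p * v p + V p - px v p) * px g p - ∑ j, r j p * U j p := by
    funext p; rw [hgtP p]; ring
  have hUx : ∀ j, px (U j) = fun p => q j p * px g p := fun j => funext (hUxP j)
  have hUy : ∀ j, py (U j) = fun p => px (q j) p * px g p - q j p * px (px g) p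
      + 2 * v p * q j p * px g p := fun j => funext (hUyP j)
  have hqy : ∀ j, py (q j) = fun p => px (px (q j)) p + 2 * v p * px (q j) p :=
    fun j => funext (hqyP j)
  have hry : ∀ j, py (r j) = fun p => -(px (px (r j)) p) + 2 * v p * px (r j) p :=
    fun j => funext (hryP j)
  -- commutation of partial derivatives
  have cXYg : py (px g) = px (py g) := pxpy hg
  have cXYg1 : py (px (px g)) = px (py (px g)) := pxpy hg1
  have cXTg : pt (px g) = px (pt g) := pxpt hg
  -- smoothness of the source sums
  have hCqr : ContDiff ℝ (⊤ : ℕ∞) (fun p => ∑ j, q j p * r j p) :=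
    ContDiff.sum fun j _ => (hq j).mul (hr j)
  have hCru : ContDiff ℝ (⊤ : ℕ∞) (fun p => ∑ j, r j p * U j p) :=
    ContDiff.sum fun j _ => (hr j).mul (hU j)
  have hCurg : ContDiff ℝ (⊤ : ℕ∞) (fun p => (∑ j, r j p * U j p) / g p) := hCru.div hg hg0
  -- x-derivatives of the source sums
  have hSqr : px (fun p => ∑ j, q j p * r j p)
      = fun p => ∑ j, (px (q j) p * r j p + q j p * px (r j) p) := by
    simp only [px_sum (fun j p => q j p * r j p) (fun j => (hq j).mul (hr j))]
    funext p; refine Finset.sum_congr rfl fun j _ => ?_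
    simp only [px_mul (hq j) (hr j)]
  have hSru : px (fun p => ∑ j, r j p * U j p)
      = fun p => ∑ j, (q j p * px g p * r j p + U j p * px (r j) p) := by
    simp only [px_sum (fun j p => r j p * U j p) (fun j => (hr j).mul (hU j))]
    funext p; refine Finset.sum_congr rfl fun j _ => ?_
    simp only [px_mul (hr j) (hU j), hUx j]; ring
  -- rewriting the new source sum
  have hQR : (fun p => ∑ j, (g p * q j p - U j p) * (r j p / g p))
      = fun p => (∑ j, q j p * r j p) - (∑ j, r j p * U j p) / g p := by
    funext p
    rw [Finset.sum_div, ← Finset.sum_sub_distrib]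
    refine Finset.sum_congr rfl fun j _ => ?_
    field_simp [hg0 p]
  refine ⟨?_, ?_, ?_, ?_⟩
  · -- potential compatibility
    intro p
    simp (disch := first | assumption | fun_prop (disch := assumption)) only
      [px_sub, px_add, px_neg, px_mul, px_div, px_const,
       py_sub, py_add, py_neg, py_mul, py_div, py_const,
       hgy, hvy, cXYg]
    field_simp [hg0 p]
  · -- the deformed mKP equation
    intro p
    simp (disch := first | assumption | fun_prop (disch := assumption)) only
      [hQR, px_sub, px_add, px_neg, px_mul, px_div, px_const,
       py_sub, py_add, py_neg, py_mul, py_div, py_const,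
       pt_sub, pt_div,
       hgy, hgt, hvy, cXYg, cXYg1, cXTg, hSqr, hSru]
    have E := hmain p
    simp only [hSqr] at E
    have hvt : pt v p = (px (px (px v)) p + 3 * py V p + 6 * V p * px v p
        - 6 * (v p)^2 * px v p
        - 4 * ∑ j, (px (q j) p * r j p + q j p * px (r j) p)) / 4 := by linarith
    rw [hvt]
    have hgp := hg0 p
    set a0 := g p with ha0
    set a1 := px g p with ha1
    set a2 := px (px g) p with ha2
    set a3 := px (px (px g)) p with ha3
    set a4 := px (px (px (px g))) p with ha4
    set b0 := v p with hb0
    set b1 := px v p with hb1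
    set b2 := px (px v) p with hb2
    set b3 := px (px (px v)) p with hb3
    set d0 := V p with hd0
    set d1 := px V p with hd1
    set dY := py V p with hdY
    set sa := ∑ j, (px (q j) p * r j p + q j p * px (r j) p) with hsa
    set sb := ∑ j, (q j p * a1 * r j p + U j p * px (r j) p) with hsb
    set sc := ∑ j, r j p * U j p with hsc
    field_simp
    ring
  · -- eigenfunction equations
    intro j p
    beta_reduce
    have hqj := hq j; have hrj := hr j; have hUj := hU j
    have hq1j : ContDiff ℝ (⊤ : ℕ∞) (px (q j)) := contDiff_px (hq j)
    simp (disch := first | assumption | fun_prop (disch := assumption)) only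
      [px_sub, px_add, px_neg, px_mul, px_div, px_const,
       py_sub, py_add, py_neg, py_mul, py_div, py_const,
       hgy, hUx j, hUy j, hqy j]
    field_simp [hg0 p]
    ring
  · -- adjoint eigenfunction equations
    intro j p
    beta_reduce
    have hqj := hq j; have hrj := hr j; have hUj := hU j
    have hr1j : ContDiff ℝ (⊤ : ℕ∞) (px (r j)) := contDiff_px (hr j)
    simp (disch := first | assumption | fun_prop (disch := assumption)) only
      [px_sub, px_add, px_neg, px_mul, px_div, px_const,
       py_sub, py_add, py_neg, py_mul, py_div, py_const,
       hgy, hry j]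
    have hgp := hg0 p
    set a0 := g p with ha0
    set a1 := px g p with ha1
    set a2 := px (px g) p with ha2
    set b0 := v p with hb0
    set c0 := r j p with hc0
    set c1 := px (r j) p with hc1
    set c2 := px (px (r j)) p with hc2
    field_simp
    ring
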